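/- If f : ℤ → ℝ is even (f(x) = f(-x)) and nonincreasing on the nonnegative integers (f(x) ≥ f(x+1) for x ≥ 0), and f(t,·) solves the discrete heat equation ∂ₜf = γΔf with f(0,·) = f, then for every t > 0 the function f(t,·) is still even and nonincreasing on the nonnegative integers. -/

import Mathlib

open scoped Nat
open MeasureTheory Real

/-!
The heat kernel is `p t z = exp (-2γt) I_|z|(2γt)` with `I_n` the modified Bessel function:
writing `exp (2l cos ξ) = exp (l e^{iξ}) exp (l e^{-iξ})` as a double power series and integrating
against `cos (nξ)` term by term keeps exactly the terms `l^a/a! · l^b/b!` with `a - b = n`.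
Hence the kernel is even, and it is nonincreasing in `|z|` because the terms of the series are
log-concave in `n`, so that by AM-GM each term of `I_(n+1)` is at most the mean of two consecutive
terms of `I_n`.

For the convolution `f = p * g` one has `f x - f (x + 1) = ∑ p (x - z) (g z - g (z + 1))`; pairing
`z = m` with `z = -(m + 1)` and using that `g` is even turns this into a sum of the nonnegative
products `(p (x - m) - p (x + m + 1)) (g m - g (m + 1))` when `x ≥ 0`.
-/

-- `besselI l n` is `I_n(2l)`, a series of products of Poisson weights.
noncomputable def besselITerm (l : ℝ) (n m : ℕ) : ℝ := l ^ (m + n) / (m + n)! * (l ^ m / m !)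

noncomputable def besselI (l : ℝ) (n : ℕ) : ℝ := ∑' m, besselITerm l n m

section BesselI

variable {l : ℝ}

lemma besselITerm_nonneg (hl : 0 ≤ l) (n m : ℕ) : 0 ≤ besselITerm l n m := by
  unfold besselITerm; positivity

lemma summable_besselITerm (hl : 0 ≤ l) (n : ℕ) : Summable (besselITerm l n) :=
  ((summable_pow_div_factorial l).mul_left (exp l)).of_nonneg_of_le
    (besselITerm_nonneg hl n) fun m =>
      mul_le_mul_of_nonneg_right (pow_div_factorial_le_exp l hl _) (by positivity)

lemma besselITerm_succ_index (n m : ℕ) :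
    besselITerm l (n + 1) m = besselITerm l n m * (l / (m + n + 1)) := by
  simp only [besselITerm, ← add_assoc, pow_succ, Nat.factorial_succ]
  push_cast
  field_simp

lemma besselITerm_succ (n m : ℕ) :
    besselITerm l n (m + 1) = besselITerm l n m * (l ^ 2 / ((m + 1) * (m + n + 1))) := by
  simp only [besselITerm, add_right_comm m 1 n, pow_succ, Nat.factorial_succ]
  push_cast
  field_simp

lemma besselITerm_succ_index_sq_le (n m : ℕ) :
    besselITerm l (n + 1) m ^ 2 ≤ besselITerm l n m * besselITerm l n (m + 1) := by
  rw [besselITerm_succ_index, besselITerm_succ]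
  set A := besselITerm l n m
  calc (A * (l / (m + n + 1))) ^ 2 = A ^ 2 * l ^ 2 / (m + n + 1) ^ 2 := by
        rw [mul_pow, div_pow]; ring
    _ ≤ A ^ 2 * l ^ 2 / ((m + 1) * (m + n + 1)) := by
      gcongr; nlinarith [n.cast_nonneg (α := ℝ), m.cast_nonneg (α := ℝ)]
    _ = A * (A * (l ^ 2 / ((m + 1) * (m + n + 1)))) := by ring

lemma besselI_succ_le (hl : 0 ≤ l) (n : ℕ) : besselI l (n + 1) ≤ besselI l n := by
  set a := besselITerm l n
  have ha : Summable a := summable_besselITerm hl n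
  have ha' : Summable fun m => a (m + 1) := (summable_nat_add_iff 1).mpr ha
  have hterm (m : ℕ) : besselITerm l (n + 1) m ≤ (a m + a (m + 1)) / 2 := by
    nlinarith [besselITerm_succ_index_sq_le (l := l) n m, sq_nonneg (a m - a (m + 1)),
      besselITerm_nonneg hl (n + 1) m, besselITerm_nonneg hl n m, besselITerm_nonneg hl n (m + 1)]
  calc besselI l (n + 1) ≤ ∑' m, (a m + a (m + 1)) / 2 :=
        (summable_besselITerm hl (n + 1)).tsum_le_tsum hterm ((ha.add ha').div_const 2)
    _ = (∑' m, a m + ∑' m, a (m + 1)) / 2 := by rw [tsum_div_const, ha.tsum_add ha']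
    _ ≤ ∑' m, a m := by linarith [ha.tsum_eq_zero_add, besselITerm_nonneg hl n 0]

lemma besselI_antitone (hl : 0 ≤ l) : Antitone (besselI l) :=
  antitone_nat_of_succ_le (besselI_succ_le hl)

end BesselI

lemma Complex.hasSum_exp_mul_exp (c d : ℂ) :
    HasSum (fun p : ℕ × ℕ => c ^ p.1 / p.1 ! * (d ^ p.2 / p.2 !)) (exp c * exp d) := by
  have hexp (c : ℂ) : HasSum (fun a : ℕ => c ^ a / a !) (exp c) := by
    rw [exp_eq_exp_ℂ]; exact NormedSpace.expSeries_div_hasSum_exp c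
  have hsum := summable_mul_of_summable_norm (f := fun a : ℕ => c ^ a / (a ! : ℂ))
    (g := fun a : ℕ => d ^ a / (a ! : ℂ)) (NormedSpace.norm_expSeries_div_summable c)
    (NormedSpace.norm_expSeries_div_summable d)
  exact HasSum.mul (f := fun a : ℕ => c ^ a / (a ! : ℂ)) (g := fun a : ℕ => d ^ a / (a ! : ℂ))
    (hexp c) (hexp d) hsum

lemma hasSum_exp_two_mul_cos_mul_cos (l ξ : ℝ) (k : ℤ) :
    HasSum (fun p : ℕ × ℕ => l ^ p.1 / p.1 ! * (l ^ p.2 / p.2 !) * cos ((p.1 - p.2 - k : ℤ) * ξ))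
      (exp (2 * l * cos ξ) * cos (k * ξ)) := by
  have e_pow (θ : ℝ) (a : ℕ) :
      Complex.exp (θ * Complex.I) ^ a = Complex.exp ((a * θ : ℝ) * Complex.I) := by
    rw [← Complex.exp_nat_mul]; push_cast; ring_nf
  have e_mul (θ θ' : ℝ) : Complex.exp (θ * Complex.I) * Complex.exp (θ' * Complex.I) =
      Complex.exp ((θ + θ' : ℝ) * Complex.I) := by
    rw [← Complex.exp_add]; push_cast; ring_nf
  have hprod := (Complex.hasSum_exp_mul_exp (l * Complex.exp (ξ * Complex.I))
    (l * Complex.exp ((-ξ : ℝ) * Complex.I))).mul_right (Complex.exp ((-(k * ξ) : ℝ) * Complex.I))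
  convert Complex.hasSum_re hprod using 1
  · ext ⟨a, b⟩
    have hterm : l ^ a / a ! * (l ^ b / b !) * cos ((a - b - k : ℤ) * ξ) =
        ((l ^ a / a ! * (l ^ b / b !) : ℝ) *
          Complex.exp ((a * ξ + b * -ξ + -(k * ξ) : ℝ) * Complex.I)).re := by
      rw [Complex.re_ofReal_mul, Complex.exp_ofReal_mul_I_re]; push_cast; ring_nf
    rw [hterm, ← e_mul, ← e_mul, ← e_pow, ← e_pow]
    push_cast
    ring_nf
  · have hcos : (l : ℂ) * Complex.exp (ξ * Complex.I) + l * Complex.exp ((-ξ : ℝ) * Complex.I) =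
        (2 * l * cos ξ : ℝ) := by
      push_cast
      rw [Complex.cos, neg_mul]
      ring
    rw [← Complex.exp_add, hcos, ← Complex.ofReal_exp, Complex.re_ofReal_mul,
      Complex.exp_ofReal_mul_I_re, cos_neg]

lemma integral_cos_int_mul (j : ℤ) :
    ∫ ξ in Set.Icc (-π) π, cos (j * ξ) = if j = 0 then 2 * π else 0 := by
  rw [integral_Icc_eq_integral_Ioc, ← intervalIntegral.integral_of_le (by linarith [pi_pos])]
  split_ifs with hj
  · simp [hj, two_mul]
  · rw [intervalIntegral.integral_comp_mul_left (fun x => cos x) (Int.cast_ne_zero.mpr hj),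
      integral_cos, mul_neg, sin_neg, sin_int_mul_pi]
    simp

lemma integral_exp_two_mul_cos_mul_cos (l : ℝ) (n : ℕ) :
    ∫ ξ in Set.Icc (-π) π, exp (2 * l * cos ξ) * cos (n * ξ) = 2 * π * besselI l n := by
  set w : ℕ × ℕ → ℝ := fun p => l ^ p.1 / p.1 ! * (l ^ p.2 / p.2 !)
  have hw : Summable fun p => ‖w p‖ :=
    Summable.mul_norm (f := fun a : ℕ => l ^ a / (a ! : ℝ)) (g := fun a : ℕ => l ^ a / (a ! : ℝ))
      (NormedSpace.norm_expSeries_div_summable l) (NormedSpace.norm_expSeries_div_summable l)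
  have hint : HasSum (fun p => ∫ ξ in Set.Icc (-π) π, w p * cos ((p.1 - p.2 - n : ℤ) * ξ))
      (∫ ξ in Set.Icc (-π) π, exp (2 * l * cos ξ) * cos (n * ξ)) :=
    hasSum_integral_of_dominated_convergence (fun p _ => ‖w p‖) (fun p => by fun_prop)
      (fun p => ae_of_all _ fun ξ => by
        rw [norm_mul]
        exact mul_le_of_le_one_right (norm_nonneg _) (abs_cos_le_one _))
      (ae_of_all _ fun _ => hw) (integrable_const _)
      (ae_of_all _ fun ξ => by simpa using hasSum_exp_two_mul_cos_mul_cos l ξ n)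
  simp only [integral_const_mul, integral_cos_int_mul] at hint
  -- after integration only the terms with `a = b + n` survive
  have hg : Function.Injective fun m : ℕ => (m + n, m) := fun m m' h => (Prod.ext_iff.mp h).2
  rw [← hg.hasSum_iff] at hint
  · rw [← hint.tsum_eq, besselI, ← tsum_mul_left]
    congr 1 with m
    simp [w, besselITerm]
    ring
  · rintro ⟨a, b⟩ hab
    rw [if_neg, mul_zero]
    rintro h
    exact hab ⟨b, Prod.ext (by dsimp only; omega) rfl⟩

lemma integral_heatSymbol_mul_cos (γ t : ℝ) (z : ℤ) :
    1 / (2 * π) * ∫ ξ in Set.Icc (-π) π, exp (-(2 * (1 - cos ξ)) * γ * t) * cos (ξ * z) =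
      exp (-(2 * (γ * t))) * besselI (γ * t) z.natAbs := by
  have hcos (ξ : ℝ) : cos (ξ * z) = cos (z.natAbs * ξ) := by
    rw [Nat.cast_natAbs, Int.cast_abs, ← cos_abs, ← cos_abs (|(z : ℝ)| * ξ), abs_mul, abs_mul,
      abs_abs, mul_comm]
  have hsplit (ξ : ℝ) : exp (-(2 * (1 - cos ξ)) * γ * t) * cos (ξ * z) =
      exp (-(2 * (γ * t))) * (exp (2 * (γ * t) * cos ξ) * cos (z.natAbs * ξ)) := by
    rw [hcos, ← mul_assoc, ← exp_add]; ring_nf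
  simp only [hsplit, integral_const_mul, integral_exp_two_mul_cos_mul_cos]
  field_simp [pi_ne_zero]

noncomputable def discreteConv (q g : ℤ → ℝ) (x : ℤ) : ℝ := ∑' z, q (x - z) * g z

lemma tsum_mul_sub_succ_nonneg {q g : ℤ → ℝ} (hq : ∀ u v : ℤ, u.natAbs ≤ v.natAbs → q v ≤ q u)
    (hg_even : ∀ z, g z = g (-z)) (hg_mono : ∀ z : ℤ, 0 ≤ z → g (z + 1) ≤ g z) {x : ℤ} (hx : 0 ≤ x)
    (hs : Summable fun z => q (x - z) * (g z - g (z + 1))) :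
    0 ≤ ∑' z, q (x - z) * (g z - g (z + 1)) := by
  set d : ℤ → ℝ := fun z => q (x - z) * (g z - g (z + 1))
  have hnat : Summable fun m : ℕ => d m := hs.comp_injective Nat.cast_injective
  have hneg : Summable fun m : ℕ => d (-(m + 1)) :=
    hs.comp_injective fun a b h => by simpa using h
  have hpair (m : ℕ) : d m + d (-(m + 1)) =
      (q (x - m) - q (x + (m + 1))) * (g m - g (m + 1)) := by
    simp only [d, show -((m : ℤ) + 1) + 1 = -m by ring, sub_neg_eq_add, ← hg_even]
    ring
  rw [tsum_of_nat_of_neg_add_one hnat hneg, ← hnat.tsum_add hneg]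
  refine tsum_nonneg fun m => hpair m ▸ mul_nonneg (sub_nonneg.mpr (hq _ _ (by omega)))
    (sub_nonneg.mpr (hg_mono m m.cast_nonneg))

namespace discreteConv

variable {q g : ℤ → ℝ}

lemma neg (hq : ∀ z, q z = q (-z)) (hg : ∀ z, g z = g (-z)) (x : ℤ) :
    discreteConv q g (-x) = discreteConv q g x := by
  rw [discreteConv, ← (Equiv.neg ℤ).tsum_eq]
  congr 1 with z
  rw [Equiv.neg_apply, ← hg, hq]
  ring_nf

lemma succ_eq (x : ℤ) : discreteConv q g (x + 1) = ∑' z, q (x - z) * g (z + 1) := by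
  rw [discreteConv, ← (Equiv.addRight 1).tsum_eq]
  simp only [Equiv.coe_addRight, add_sub_add_right_eq_sub]

lemma succ_le (hq : ∀ u v : ℤ, u.natAbs ≤ v.natAbs → q v ≤ q u)
    (hg_even : ∀ z, g z = g (-z)) (hg_mono : ∀ z : ℤ, 0 ≤ z → g (z + 1) ≤ g z) {x : ℤ} (hx : 0 ≤ x)
    (h : Summable fun z => q (x - z) * g z) (h' : Summable fun z => q (x + 1 - z) * g z) :
    discreteConv q g (x + 1) ≤ discreteConv q g x := by
  have hshift : Summable fun z => q (x - z) * g (z + 1) := by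
    simpa [Function.comp_def] using h'.comp_injective (add_left_injective 1)
  rw [← sub_nonneg, discreteConv, succ_eq, ← h.tsum_sub hshift]
  simp only [← mul_sub]
  exact tsum_mul_sub_succ_nonneg hq hg_even hg_mono hx (by simpa only [mul_sub] using h.sub hshift)

end discreteConv

theorem heat_preserves_even_monotone (γ : ℝ) (hγ : 0 < γ) (p : ℝ → ℤ → ℝ)
    (hp : ∀ (t : ℝ) (z : ℤ), p t z =
      (1 / (2 * Real.pi)) * ∫ ξ in Set.Icc (-Real.pi) Real.pi,
        Real.exp (-(2 * (1 - Real.cos ξ)) * γ * t) * Real.cos (ξ * (z : ℝ)))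
    (g : ℤ → ℝ) (heven : ∀ x : ℤ, g x = g (-x))
    (hmono : ∀ x : ℤ, 0 ≤ x → g (x + 1) ≤ g x)
    (f : ℝ → ℤ → ℝ)
    (hf : ∀ (t : ℝ) (x : ℤ), f t x = ∑' z : ℤ, p t (x - z) * g z)
    (hsum : ∀ (t : ℝ) (x : ℤ), 0 ≤ t → Summable (fun z : ℤ => p t (x - z) * g z)) :
    ∀ t : ℝ, 0 < t →
      (∀ x : ℤ, f t x = f t (-x)) ∧ (∀ x : ℤ, 0 ≤ x → f t (x + 1) ≤ f t x) := by
  intro t ht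
  have hγt : 0 ≤ γ * t := (mul_pos hγ ht).le
  have hkernel (z : ℤ) : p t z = exp (-(2 * (γ * t))) * besselI (γ * t) z.natAbs :=
    (hp t z).trans (integral_heatSymbol_mul_cos γ t z)
  have hkernel_even (z : ℤ) : p t z = p t (-z) := by rw [hkernel, hkernel, Int.natAbs_neg]
  have hkernel_anti (u v : ℤ) (huv : u.natAbs ≤ v.natAbs) : p t v ≤ p t u := by
    rw [hkernel, hkernel]
    exact mul_le_mul_of_nonneg_left (besselI_antitone hγt huv) (exp_nonneg _)
  have hconv : f t = discreteConv (p t) g := funext (hf t)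
  refine ⟨fun x => ?_, fun x hx => ?_⟩
  · rw [hconv, discreteConv.neg hkernel_even heven]
  · rw [hconv]
    exact discreteConv.succ_le hkernel_anti heven hmono hx (hsum t x ht.le) (hsum t (x + 1) ht.le)
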